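/- arXiv:2203.01758 — 2 statements merged into one kernel-verified Lean document; each statement's English description precedes it below -/
import Mathlib

section
/- Let l ∈ ℝⁿ, n ≥ 1 and ρ ≥ 0, and let P_{n,ρ} = { p ∈ Δₙ : n‖p‖₂² ≤ 2ρ + 1 } be the χ²-ball around the uniform distribution. Then min_{p ∈ P_{n,ρ}} pᵀl satisfies max{ √(2ρ s²ₙ) − 2Mρ, 0 } ≤ (1/n)∑ᵢ lᵢ − min_{p ∈ P_{n,ρ}} pᵀl ≤ √(2ρ s²ₙ), where s²ₙ = (1/n)∑ᵢ(lᵢ − l̄)² is the empirical variance of l and M = max lᵢ − min lᵢ. -/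
/-- The set of values `pᵀ l` as `p` ranges over the χ²-ball
`P_{n,ρ} = { p ∈ Δₙ : n‖p‖₂² ≤ 2ρ + 1 }` around the uniform distribution (here with `n + 1`
coordinates, encoding `n ≥ 1`). -/
def chiSqBallValues (n : ℕ) (ρ : ℝ) (l : Fin (n + 1) → ℝ) : Set ℝ :=
  {v | ∃ p : Fin (n + 1) → ℝ, (∀ i, 0 ≤ p i) ∧ ∑ i, p i = 1 ∧
    ((n : ℝ) + 1) * ∑ i, (p i) ^ 2 ≤ 2 * ρ + 1 ∧ v = ∑ i, p i * l i}

/-- The empirical mean `l̄ = (1/n)∑ᵢ lᵢ`. -/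
noncomputable def empMean (n : ℕ) (l : Fin (n + 1) → ℝ) : ℝ :=
  (∑ i, l i) / ((n : ℝ) + 1)

/-- The empirical variance `s²ₙ = (1/n)∑ᵢ (lᵢ − l̄)²`. -/
noncomputable def empVar (n : ℕ) (l : Fin (n + 1) → ℝ) : ℝ :=
  (∑ i, (l i - empMean n l) ^ 2) / ((n : ℝ) + 1)

/-- The range `M = max lᵢ − min lᵢ`. -/
noncomputable def empRange (n : ℕ) (l : Fin (n + 1) → ℝ) : ℝ :=
  Finset.univ.sup' Finset.univ_nonempty l - Finset.univ.inf' Finset.univ_nonempty l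

/-! Writing `cᵢ = lᵢ - l̄` and `N = n + 1`, every `p` in the simplex has
`pᵀl - l̄ = ∑ (pᵢ - 1/N) cᵢ`, so Cauchy–Schwarz together with `∑ (pᵢ - 1/N)² = ‖p‖² - 1/N ≤ 2ρ/N`
gives `l̄ - pᵀl ≤ √(2ρ s²)`. Conversely the tilted distributions `pᵢ = (1 - d cᵢ)/N` lie in the ball
as long as `d M ≤ 1` (nonnegativity) and `d² s² ≤ 2ρ` (the χ² constraint), and achieve
`pᵀl = l̄ - d s²`; the best admissible `d` yields the lower bound `√(2ρ s²) - 2Mρ`. -/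

open Finset

lemma exists_tilt_coeff {M s ρ : ℝ} (hM : 0 ≤ M) (hs : 0 ≤ s) (hρ : 0 ≤ ρ) :
    ∃ d, 0 ≤ d ∧ d * M ≤ 1 ∧ d ^ 2 * s ≤ 2 * ρ ∧ √(2 * ρ * s) - 2 * M * ρ ≤ d * s := by
  obtain ⟨r, hr, hρr⟩ : ∃ r, 0 ≤ r ∧ 2 * ρ = r ^ 2 :=
    ⟨√(2 * ρ), Real.sqrt_nonneg _, (Real.sq_sqrt (by positivity)).symm⟩
  obtain ⟨σ, hσ, rfl⟩ : ∃ σ, 0 ≤ σ ∧ s = σ ^ 2 :=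
    ⟨√s, Real.sqrt_nonneg _, (Real.sq_sqrt hs).symm⟩
  rw [mul_assoc 2 M, mul_left_comm, hρr, Real.sqrt_mul' _ (sq_nonneg σ), Real.sqrt_sq hr,
    Real.sqrt_sq hσ]
  -- take `d = r / σ` when `r M ≤ σ`, and `d = 1 / M` otherwise
  rcases lt_or_ge σ (r * M) with hσM | hσM
  · have hM' : 0 < M := pos_of_mul_pos_right (hσ.trans_lt hσM) hr
    refine ⟨1 / M, by positivity, by field_simp; rfl, ?_, ?_⟩
    · rw [div_pow, one_pow, div_mul_eq_mul_div, one_mul, div_le_iff₀ (by positivity)]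
      nlinarith
    · rw [div_mul_eq_mul_div, one_mul, le_div_iff₀ hM']
      nlinarith
  · rcases hσ.eq_or_lt with rfl | hσ'
    · exact ⟨0, le_rfl, by simp, by simp; positivity, by simp; positivity⟩
    · refine ⟨r / σ, by positivity, ?_, ?_, ?_⟩
      · rw [div_mul_eq_mul_div, div_le_one hσ']
        exact hσM
      · field_simp; rfl
      · rw [div_mul_eq_mul_div, le_div_iff₀ hσ']
        nlinarith [mul_nonneg (mul_nonneg hM (sq_nonneg r)) hσ]

section

variable {n : ℕ} {l : Fin (n + 1) → ℝ}

variable (l) in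
lemma sum_sub_empMean : ∑ i, (l i - empMean n l) = 0 := by
  rw [sum_sub_distrib, sum_const, card_univ, Fintype.card_fin, nsmul_eq_mul, empMean]
  push_cast
  field_simp
  ring

variable (l) in
lemma sum_sq_sub_empMean : ∑ i, (l i - empMean n l) ^ 2 = (n + 1) * empVar n l := by
  rw [empVar]
  field_simp

variable (l) in
lemma empVar_nonneg : 0 ≤ empVar n l := by
  unfold empVar
  positivity

variable (l) in
lemma inf'_le_empMean : univ.inf' univ_nonempty l ≤ empMean n l := by
  rw [empMean, le_div_iff₀ (by positivity)]
  have := card_nsmul_le_sum univ l (univ.inf' univ_nonempty l) fun i _ => inf'_le l (mem_univ i)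
  simpa [mul_comm] using this

lemma sub_empMean_le_empRange (i : Fin (n + 1)) : l i - empMean n l ≤ empRange n l := by
  rw [empRange]
  linarith [le_sup' l (mem_univ i), inf'_le_empMean l]

variable (l) in
lemma empRange_nonneg : 0 ≤ empRange n l :=
  sub_nonneg.2 ((inf'_le l (mem_univ 0)).trans (le_sup' l (mem_univ 0)))

lemma sum_mul_sub_empMean {p : Fin (n + 1) → ℝ} (hp : ∑ i, p i = 1) :
    ∑ i, p i * l i - empMean n l = ∑ i, (p i - 1 / (n + 1)) * (l i - empMean n l) := by
  simp_rw [sub_mul (p _), sum_sub_distrib, ← mul_sum, sum_sub_empMean, mul_zero, sub_zero,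
    mul_sub (p _), sum_sub_distrib, ← sum_mul, hp, one_mul]

lemma sum_sq_sub_uniform {p : Fin (n + 1) → ℝ} (hp : ∑ i, p i = 1) :
    ∑ i, (p i - 1 / (n + 1)) ^ 2 = ∑ i, p i ^ 2 - 1 / (n + 1) := by
  simp only [sub_sq, sum_add_distrib, sum_sub_distrib, ← sum_mul, ← mul_sum, hp, sum_const,
    card_univ, Fintype.card_fin, nsmul_eq_mul]
  push_cast
  field_simp
  ring

lemma sq_sum_mul_sub_empMean_le {p : Fin (n + 1) → ℝ} (hp : ∑ i, p i = 1) :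
    (∑ i, p i * l i - empMean n l) ^ 2 ≤ ((n + 1) * ∑ i, p i ^ 2 - 1) * empVar n l := by
  rw [sum_mul_sub_empMean hp]
  calc _ ≤ (∑ i, (p i - 1 / (n + 1)) ^ 2) * ∑ i, (l i - empMean n l) ^ 2 :=
        sum_mul_sq_le_sq_mul_sq _ _ _
    _ = _ := by
      rw [sum_sq_sub_uniform hp, sum_sq_sub_empMean]
      field_simp

lemma empMean_sub_sqrt_le_of_mem {ρ v : ℝ} (hv : v ∈ chiSqBallValues n ρ l) :
    empMean n l - √(2 * ρ * empVar n l) ≤ v := by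
  obtain ⟨p, -, hp, hp2, rfl⟩ := hv
  have hsq : (∑ i, p i * l i - empMean n l) ^ 2 ≤ 2 * ρ * empVar n l :=
    (sq_sum_mul_sub_empMean_le hp).trans
      (mul_le_mul_of_nonneg_right (by linarith) (empVar_nonneg l))
  linarith [neg_abs_le (∑ i, p i * l i - empMean n l), Real.abs_le_sqrt hsq]

lemma empMean_sub_mul_empVar_mem {ρ d : ℝ} (hd : 0 ≤ d) (hdM : d * empRange n l ≤ 1)
    (hdv : d ^ 2 * empVar n l ≤ 2 * ρ) :
    empMean n l - d * empVar n l ∈ chiSqBallValues n ρ l := by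
  set p : Fin (n + 1) → ℝ := fun i => (1 - d * (l i - empMean n l)) / (n + 1) with hp_def
  have hp : ∑ i, p i = 1 := by
    rw [hp_def, ← sum_div, sum_sub_distrib, ← mul_sum, sum_sub_empMean, mul_zero, sub_zero,
      sum_const, card_univ, Fintype.card_fin, nsmul_eq_mul]
    push_cast
    field_simp
  refine ⟨p, fun i => ?_, hp, ?_, ?_⟩
  · have := mul_le_mul_of_nonneg_left (sub_empMean_le_empRange (l := l) i) hd
    exact div_nonneg (by linarith) (by positivity)
  · simp only [hp_def, div_pow, ← sum_div, sub_sq (1 : ℝ), mul_pow, sum_add_distrib]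
    rw [sum_sub_distrib, ← mul_sum, ← mul_sum, ← mul_sum, sum_sub_empMean, sum_sq_sub_empMean]
    simp only [mul_zero, sub_zero, one_pow, sum_const, card_univ, Fintype.card_fin, nsmul_eq_mul,
      mul_one]
    push_cast
    field_simp
    nlinarith [mul_le_mul_of_nonneg_left hdv (by positivity : (0 : ℝ) ≤ n + 1)]
  · have hpc : ∀ i, (p i - 1 / (n + 1)) * (l i - empMean n l)
        = -(d / (n + 1)) * (l i - empMean n l) ^ 2 := fun i => by
      simp only [hp_def]
      field_simp
      ring
    have := sum_mul_sub_empMean (l := l) hp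
    rw [sum_congr rfl fun i _ => hpc i, ← mul_sum, sum_sq_sub_empMean] at this
    field_simp at this
    linarith

end

/-- Let `l ∈ ℝⁿ` (with `n ≥ 1`) and `ρ ≥ 0`, and let
`P_{n,ρ} = { p ∈ Δₙ : n‖p‖₂² ≤ 2ρ + 1 }` be the χ²-ball around the uniform distribution. Then
`max{ √(2ρ s²ₙ) − 2Mρ, 0 } ≤ (1/n)∑ᵢ lᵢ − min_{p ∈ P_{n,ρ}} pᵀl ≤ √(2ρ s²ₙ)`,
where `s²ₙ` is the empirical variance of `l` and `M = max lᵢ − min lᵢ`. -/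
theorem stmt_9 (n : ℕ) (ρ : ℝ) (hρ : 0 ≤ ρ) (l : Fin (n + 1) → ℝ) :
    max (Real.sqrt (2 * ρ * empVar n l) - 2 * empRange n l * ρ) 0
        ≤ empMean n l - sInf (chiSqBallValues n ρ l) ∧
      empMean n l - sInf (chiSqBallValues n ρ l) ≤ Real.sqrt (2 * ρ * empVar n l) := by
  have hbdd : BddBelow (chiSqBallValues n ρ l) := ⟨_, fun _ => empMean_sub_sqrt_le_of_mem⟩
  have huniform : empMean n l ∈ chiSqBallValues n ρ l := by
    simpa using empMean_sub_mul_empVar_mem (l := l) le_rfl (by simp) (by simpa using hρ)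
  obtain ⟨d, hd, hdM, hdv, hgap⟩ := exists_tilt_coeff (empRange_nonneg l) (empVar_nonneg l) hρ
  have hInf_le_tilt := csInf_le hbdd (empMean_sub_mul_empVar_mem hd hdM hdv)
  have hInf_le_mean := csInf_le hbdd huniform
  have hInf_ge := le_csInf ⟨_, huniform⟩ fun _ => empMean_sub_sqrt_le_of_mem
  exact ⟨max_le (by linarith) (by linarith), by linarith⟩
end

section
/- Let 𝓕 be an RKHS with kernel bounded by sup_{x,y} k(x,y) ≤ B, and let X₁, …, Xₙ be i.i.d. samples from a probability measure P. Then the expected MMD between the empirical measure and P satisfies E[ MMD( (1/n)∑ᵢδ_{Xᵢ}, P; 𝓕 ) ] ≤ 2√(B/n). -/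
/-!
Centre the features: with `Yᵢ = φ(Xᵢ) - 𝔼 φ`, the empirical MMD is `‖n⁻¹ ∑ Yᵢ‖`. Independence
makes the `Yᵢ` orthogonal in `L²(Pr; H)`, so `𝔼‖∑ Yᵢ‖² = n 𝔼‖Y₁‖² ≤ n (2√B)²`, and Jensen's
inequality `𝔼‖Z‖ ≤ √(𝔼‖Z‖²)` turns this into the bound `2√(B/n)`.
-/

open MeasureTheory ProbabilityTheory
open scoped RealInnerProductSpace

section

variable {Ω 𝒳 𝒴 E : Type*} [MeasurableSpace Ω] [MeasurableSpace 𝒳] [MeasurableSpace 𝒴]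
  {Pr : Measure Ω} [NormedAddCommGroup E]

theorem integral_norm_le_sqrt_integral_norm_sq [IsProbabilityMeasure Pr] {Z : Ω → E}
    (hZ : MemLp Z 2 Pr) : ∫ ω, ‖Z ω‖ ∂Pr ≤ √(∫ ω, ‖Z ω‖ ^ 2 ∂Pr) := by
  refine Real.le_sqrt_of_sq_le ?_
  have h := variance_nonneg (fun ω => ‖Z ω‖) Pr
  rw [variance_eq_sub hZ.norm] at h
  simpa [Pi.pow_apply] using h

theorem ProbabilityTheory.HasLaw.memLp_comp {X : Ω → 𝒳} {P : Measure 𝒳} (hX : HasLaw X P Pr)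
    {f : 𝒳 → E} {p : ENNReal} (hf : MemLp f p P) : MemLp (fun ω => f (X ω)) p Pr :=
  (hX.map_eq ▸ hf).comp_of_map hX.aemeasurable

variable [InnerProductSpace ℝ E]

theorem integral_norm_sum_sq_of_pairwise_orthogonal {ι : Type*} (s : Finset ι)
    {Y : ι → Ω → E} (hY : ∀ i, MemLp (Y i) 2 Pr)
    (horth : Pairwise fun i j => ∫ ω, ⟪Y i ω, Y j ω⟫ ∂Pr = 0) :
    ∫ ω, ‖∑ i ∈ s, Y i ω‖ ^ 2 ∂Pr = ∑ i ∈ s, ∫ ω, ‖Y i ω‖ ^ 2 ∂Pr := by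
  have hint : ∀ i j, Integrable (fun ω => ⟪Y i ω, Y j ω⟫) Pr := fun i j =>
    ((hY i).norm.integrable_mul (hY j).norm).mono' ((hY i).1.inner (hY j).1)
      (.of_forall fun ω => by simpa using abs_real_inner_le_norm (Y i ω) (Y j ω))
  simp_rw [← real_inner_self_eq_norm_sq, sum_inner, inner_sum]
  rw [integral_finsetSum _ fun i _ => integrable_finsetSum _ fun j _ => hint i j]
  refine Finset.sum_congr rfl fun i hi => ?_
  rw [integral_finsetSum _ fun j _ => hint i j, Finset.sum_eq_single_of_mem i hi]
  exact fun j _ hji => horth hji.symm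

theorem integral_norm_sub_integral_sq_le {P : Measure 𝒳} [IsProbabilityMeasure P] {f : 𝒳 → E}
    {C : ℝ} (hf : ∀ᵐ x ∂P, ‖f x‖ ≤ C) : ∫ x, ‖f x - ∫ y, f y ∂P‖ ^ 2 ∂P ≤ (2 * C) ^ 2 := by
  have hmean : ‖∫ y, f y ∂P‖ ≤ C := by simpa using norm_integral_le_of_norm_le_const hf
  simpa using integral_mono_of_nonneg (.of_forall fun x => by positivity) (integrable_const _)
    (hf.mono fun x hx => pow_le_pow_left₀ (norm_nonneg _)
      (by linarith [norm_sub_le (f x) (∫ y, f y ∂P)]) 2)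

variable [CompleteSpace E]

theorem ProbabilityTheory.IndepFun.integral_inner_comp [IsFiniteMeasure Pr] {X : Ω → 𝒳}
    {Y : Ω → 𝒴} {μ : Measure 𝒳} {ν : Measure 𝒴} (hX : HasLaw X μ Pr) (hY : HasLaw Y ν Pr)
    (hXY : IndepFun X Y Pr) {f : 𝒳 → E} {g : 𝒴 → E} (hf : Integrable f μ)
    (hg : Integrable g ν) :
    ∫ ω, ⟪f (X ω), g (Y ω)⟫ ∂Pr = ⟪∫ x, f x ∂μ, ∫ y, g y ∂ν⟫ := by
  have := hX.isFiniteMeasure_iff.1 ‹_›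
  have := hY.isFiniteMeasure_iff.1 ‹_›
  have hfg : Integrable (fun p : 𝒳 × 𝒴 => ⟪f p.1, g p.2⟫) (μ.prod ν) :=
    (hf.norm.mul_prod hg.norm).mono' (hf.1.comp_fst.inner hg.1.comp_snd)
      (.of_forall fun p => by simpa using abs_real_inner_le_norm (f p.1) (g p.2))
  have hlaw := (hXY.hasLaw_prod hX hY).integral_comp hfg.1
  rw [Function.comp_def] at hlaw
  rw [hlaw, integral_prod _ hfg]
  simp_rw [integral_inner hg]
  simpa only [real_inner_comm] using integral_inner (𝕜 := ℝ) hf (∫ y, g y ∂ν)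

variable [IsProbabilityMeasure Pr] {ι : Type*} {X : ι → Ω → 𝒳} {P : Measure 𝒳}

theorem integral_norm_sum_comp_sq_of_indepFun (s : Finset ι) (hX : ∀ i, HasLaw (X i) P Pr)
    (hindep : Pairwise fun i j => IndepFun (X i) (X j) Pr) {f : 𝒳 → E} (hf : MemLp f 2 P)
    (hf0 : ∫ x, f x ∂P = 0) :
    ∫ ω, ‖∑ i ∈ s, f (X i ω)‖ ^ 2 ∂Pr = s.card * ∫ x, ‖f x‖ ^ 2 ∂P := by
  have horth : Pairwise fun i j => ∫ ω, ⟪f (X i ω), f (X j ω)⟫ ∂Pr = 0 := fun i j hij => by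
    have := (hX i).isFiniteMeasure_iff.1 inferInstance
    have hfi := hf.integrable one_le_two
    dsimp only
    rw [(hindep hij).integral_inner_comp (hX i) (hX j) hfi hfi, hf0, inner_zero_left]
  rw [integral_norm_sum_sq_of_pairwise_orthogonal s (fun i => (hX i).memLp_comp hf) horth,
    ← nsmul_eq_mul, ← Finset.sum_const]
  refine Finset.sum_congr rfl fun i _ => ?_
  exact (hX i).integral_comp (f := fun x => ‖f x‖ ^ 2) (hf.1.norm.pow 2)

theorem integral_norm_smul_sum_sub_integral_le {s : Finset ι} (hs : s.Nonempty)
    (hX : ∀ i, HasLaw (X i) P Pr) (hindep : Pairwise fun i j => IndepFun (X i) (X j) Pr)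
    {f : 𝒳 → E} (hf : MemLp f 2 P) :
    ∫ ω, ‖(s.card : ℝ)⁻¹ • ∑ i ∈ s, f (X i ω) - ∫ x, f x ∂P‖ ∂Pr
      ≤ √((∫ x, ‖f x - ∫ y, f y ∂P‖ ^ 2 ∂P) / s.card) := by
  have := (hX hs.choose).isProbabilityMeasure_iff.1 inferInstance
  set m := ∫ x, f x ∂P
  have hg : MemLp (fun x => f x - m) 2 P := hf.sub (memLp_const m)
  have hg0 : ∫ x, f x - m ∂P = 0 := by
    simp [integral_sub (hf.integrable one_le_two) (integrable_const m), m]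
  have hcard : (s.card : ℝ) ≠ 0 := by simp [hs.ne_empty]
  have hcenter : ∀ ω, (s.card : ℝ)⁻¹ • ∑ i ∈ s, f (X i ω) - m
      = (s.card : ℝ)⁻¹ • ∑ i ∈ s, (f (X i ω) - m) := fun ω => by
    rw [Finset.sum_sub_distrib, smul_sub, Finset.sum_const, ← Nat.cast_smul_eq_nsmul ℝ,
      inv_smul_smul₀ hcard]
  have hS : MemLp (fun ω => ∑ i ∈ s, (f (X i ω) - m)) 2 Pr :=
    memLp_finsetSum s fun i _ => (hX i).memLp_comp hg
  simp_rw [hcenter]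
  calc _ ≤ √(∫ ω, ‖(s.card : ℝ)⁻¹ • ∑ i ∈ s, (f (X i ω) - m)‖ ^ 2 ∂Pr) :=
        integral_norm_le_sqrt_integral_norm_sq (hS.const_smul _)
    _ = √((∫ x, ‖f x - m‖ ^ 2 ∂P) / s.card) := by
        simp_rw [norm_smul, mul_pow, integral_const_mul, Real.norm_eq_abs, sq_abs,
          integral_norm_sum_comp_sq_of_indepFun s hX hindep hg hg0]
        congr 1
        field_simp

end

theorem stmt_15_general {𝒳 H : Type*} [MeasurableSpace 𝒳]
    [NormedAddCommGroup H] [InnerProductSpace ℝ H] [CompleteSpace H]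
    {Ω : Type*} [MeasurableSpace Ω] (Pr : Measure Ω) [IsProbabilityMeasure Pr]
    (P : Measure 𝒳) [IsProbabilityMeasure P]
    (φ : 𝒳 → H) (B : ℝ)
    (hk : ∀ x y : 𝒳, (inner ℝ (φ x) (φ y) : ℝ) ≤ B)
    (n : ℕ) (hn : 0 < n)
    (X : Fin n → Ω → 𝒳)
    (hiid : iIndepFun X Pr)
    (hdist : ∀ i, Measure.map (X i) Pr = P)
    (hint : Integrable φ P) :
    (∫ ω, ‖(n : ℝ)⁻¹ • ∑ i, φ (X i ω) - ∫ x, φ x ∂P‖ ∂Pr)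
      ≤ 2 * Real.sqrt (B / n) := by
  have hlaw : ∀ i, HasLaw (X i) P Pr := fun i =>
    ⟨.of_map_ne_zero (hdist i ▸ IsProbabilityMeasure.ne_zero P), hdist i⟩
  have hφ : ∀ x, ‖φ x‖ ≤ √B := fun x =>
    Real.le_sqrt_of_sq_le (by simpa only [real_inner_self_eq_norm_sq] using hk x x)
  have hdev := integral_norm_smul_sum_sub_integral_le ⟨⟨0, hn⟩, Finset.mem_univ _⟩ hlaw
    (fun i j hij => hiid.indepFun hij) (MemLp.of_bound hint.1 _ (.of_forall hφ))
  rw [Finset.card_univ, Fintype.card_fin] at hdev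
  calc _ ≤ √((∫ x, ‖φ x - ∫ y, φ y ∂P‖ ^ 2 ∂P) / n) := hdev
    _ ≤ √((2 * √B) ^ 2 / n) := by
        gcongr
        exact integral_norm_sub_integral_sq_le (.of_forall hφ)
    _ = 2 * √(B / n) := by
        rw [Real.sqrt_div' _ (Nat.cast_nonneg n), Real.sqrt_sq (by positivity),
          Real.sqrt_div' _ (Nat.cast_nonneg n), mul_div_assoc]

/-- Let `𝓕` be an RKHS with feature map `φ` and kernel
`k(x,y) = ⟪φ(x), φ(y)⟫` bounded by `sup_{x,y} k(x,y) ≤ B`, and let `X₁, …, Xₙ` be i.i.d.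
samples from a probability measure `P`. Then the expected MMD between the empirical measure
and `P` satisfies
`E[ MMD((1/n)∑ᵢ δ_{Xᵢ}, P; 𝓕) ] ≤ 2√(B/n)`,
where `MMD(Q, P; 𝓕) = ‖ψ_Q − ψ_P‖` is the norm distance of the kernel mean embeddings. -/
theorem stmt_15 {𝒳 H : Type*} [MeasurableSpace 𝒳]
    [NormedAddCommGroup H] [InnerProductSpace ℝ H] [CompleteSpace H]
    {Ω : Type*} [MeasurableSpace Ω] (Pr : Measure Ω) [IsProbabilityMeasure Pr]
    (P : Measure 𝒳) [IsProbabilityMeasure P]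
    (φ : 𝒳 → H) (B : ℝ)
    (hk : ∀ x y : 𝒳, (inner ℝ (φ x) (φ y) : ℝ) ≤ B)
    (n : ℕ) (hn : 0 < n)
    (X : Fin n → Ω → 𝒳) (hmeas : ∀ i, Measurable (X i))
    (hiid : iIndepFun X Pr)
    (hdist : ∀ i, Measure.map (X i) Pr = P)
    (hint : Integrable φ P) :
    (∫ ω, ‖(n : ℝ)⁻¹ • ∑ i, φ (X i ω) - ∫ x, φ x ∂P‖ ∂Pr)
      ≤ 2 * Real.sqrt (B / n) :=
  stmt_15_general Pr P φ B hk n hn X hiid hdist hint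
end
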